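/- For a positive integer k, the number of monotone lattice paths from (a, a·k+j) to (m, n) staying weakly above y = kx, where 0 ≤ j ≤ k and n ≥ km, also equals C(m+n−(k+1)a, m−a) − k·C(m+n−(k+1)a, m−a−1). -/

import Mathlib

/-!
Classify a path by its last step. A path from `(a, b)` to `(m, n) ≠ (a, b)` that stays on or above
`y = k x` arrives from `(m - 1, n)` or from `(m, n - 1)`, so the counts satisfy Pascal's recursion.
The point `(m, n - 1)` is below the line when `n = k m`, and `(a - 1, n)` cannot be reached.
The formula `C(x, s) - k C(x, s - 1)`, with `x = m + n - (k + 1) a` and `s = m - a`, satisfies the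
same recursion by Pascal's rule. It equals `1` when `s = 0`, vanishes when `s < 0`, and vanishes at
`x = (k + 1) s - 1` because `C((k + 1) s - 1, s) = k C((k + 1) s - 1, s - 1)`.
-/

open Finset

/-- A monotone lattice path from `s` to `t` using unit steps `(1,0)` and `(0,1)`. -/
def MonoPath (s t : ℤ × ℤ) (P : List (ℤ × ℤ)) : Prop :=
  P.head? = some s ∧ P.getLast? = some t ∧
  P.Chain' (fun p q => q = (p.1 + 1, p.2) ∨ q = (p.1, p.2 + 1))

/-- Integer binomial coefficient, `0` for negative lower index. -/
def IC (x j : ℤ) : ℕ := if j < 0 then 0 else x.toNat.choose j.toNat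

/-- Number of monotone lattice paths from `(a,b)` to `(m,n)` staying weakly above `y = kx - r`. -/
noncomputable def NW (k r a b m n : ℤ) : ℕ :=
  Set.ncard {P : List (ℤ × ℤ) | MonoPath (a, b) (m, n) P ∧ ∀ p ∈ P, k * p.1 - r ≤ p.2}

/-- Number of monotone lattice paths from `(a,b)` to `(m,n)` staying strictly above `y = kx - r`. -/
noncomputable def NS (k r a b m n : ℤ) : ℕ :=
  Set.ncard {P : List (ℤ × ℤ) | MonoPath (a, b) (m, n) P ∧ ∀ p ∈ P, k * p.1 - r < p.2}

def IsStep (p q : ℤ × ℤ) : Prop := q = (p.1 + 1, p.2) ∨ q = (p.1, p.2 + 1)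

lemma IsStep.lt {p q : ℤ × ℤ} (h : IsStep p q) : p < q := by
  rcases h with rfl | rfl <;> simp [Prod.lt_iff]

lemma isStep_iff {p q : ℤ × ℤ} : IsStep p q ↔ p = (q.1 - 1, q.2) ∨ p = (q.1, q.2 - 1) := by
  obtain ⟨p₁, p₂⟩ := p
  obtain ⟨q₁, q₂⟩ := q
  simp only [IsStep, Prod.mk.injEq]
  omega

namespace MonoPath

variable {s t u : ℤ × ℤ} {P Q : List (ℤ × ℤ)}

lemma isChain (h : MonoPath s t P) : P.IsChain IsStep := h.2.2

lemma pairwise_lt (h : MonoPath s t P) : P.Pairwise (· < ·) :=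
  (h.isChain.imp fun _ _ => IsStep.lt).pairwise

lemma mem_Icc (h : MonoPath s t P) {p : ℤ × ℤ} (hp : p ∈ P) : s ≤ p ∧ p ≤ t := by
  obtain ⟨R, rfl⟩ := List.head?_eq_some_iff.1 h.1
  obtain ⟨I, hI⟩ := List.getLast?_eq_some_iff.1 h.2.1
  have hs := List.pairwise_cons.1 h.pairwise_lt
  have ht := List.pairwise_append.1 (hI ▸ h.pairwise_lt)
  constructor
  · rcases List.mem_cons.1 hp with rfl | hp
    exacts [le_rfl, (hs.1 p hp).le]
  · rcases List.mem_append.1 (hI ▸ hp) with hp | hp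
    exacts [(ht.2.2 p hp t (List.mem_singleton_self t)).le, (List.mem_singleton.1 hp).le]

lemma le (h : MonoPath s t P) : s ≤ t :=
  (h.mem_Icc (List.mem_of_getLast? h.2.1)).1

lemma eq_singleton (h : MonoPath s s P) : P = [s] := by
  obtain ⟨R, rfl⟩ := List.head?_eq_some_iff.1 h.1
  rw [List.eq_nil_iff_forall_not_mem.2 fun q hq =>
    (List.rel_of_pairwise_cons h.pairwise_lt hq).not_ge (h.mem_Icc (List.mem_cons_of_mem s hq)).2]

lemma append_singleton (h : MonoPath s u Q) (hu : IsStep u t) : MonoPath s t (Q ++ [t]) := by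
  obtain ⟨R, rfl⟩ := List.head?_eq_some_iff.1 h.1
  refine ⟨rfl, List.getLast?_concat,
    List.isChain_append.2 ⟨h.isChain, List.isChain_singleton t, ?_⟩⟩
  simpa [h.2.1, IsStep] using hu

lemma exists_eq_append_singleton (h : MonoPath s t P) (hst : s ≠ t) :
    ∃ u Q, P = Q ++ [t] ∧ MonoPath s u Q ∧ IsStep u t := by
  obtain ⟨Q, rfl⟩ := List.getLast?_eq_some_iff.1 h.2.1
  have hQ : Q ≠ [] := by
    rintro rfl
    exact hst (by simpa using h.1.symm)
  have hchain := List.isChain_append.1 h.isChain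
  refine ⟨Q.getLast hQ, Q, rfl, ⟨?_, List.getLast?_eq_some_getLast hQ, hchain.1⟩, ?_⟩
  · rw [← List.head?_append_of_ne_nil Q hQ]
    exact h.1
  · simpa [List.getLast?_eq_some_getLast hQ] using hchain.2.2

end MonoPath

lemma monoPath_finite (s t : ℤ × ℤ) : {P | MonoPath s t P}.Finite := by
  set B := Finset.Icc s t
  refine ((List.finite_length_le B (Fintype.card B)).image (List.map Subtype.val)).subset ?_
  intro P hP
  have hB : ∀ p ∈ P, p ∈ B := fun p hp => Finset.mem_Icc.2 (MonoPath.mem_Icc hP hp)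
  lift P to List B using hB
  exact ⟨P, (List.Nodup.of_map _ (hP.pairwise_lt.imp ne_of_lt)).length_le_card, rfl⟩

def abovePaths (k : ℤ) (s t : ℤ × ℤ) : Set (List (ℤ × ℤ)) :=
  {P | MonoPath s t P ∧ ∀ p ∈ P, k * p.1 ≤ p.2}

lemma NW_zero_eq_ncard_abovePaths (k a b m n : ℤ) :
    NW k 0 a b m n = (abovePaths k (a, b) (m, n)).ncard := by
  simp only [NW, abovePaths, sub_zero]

section abovePaths

variable {k : ℤ} {s t : ℤ × ℤ}

lemma abovePaths_self (hs : k * s.1 ≤ s.2) : abovePaths k s s = {[s]} := by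
  ext P
  refine ⟨fun h => h.1.eq_singleton, ?_⟩
  rintro rfl
  exact ⟨⟨rfl, rfl, List.isChain_singleton s⟩, by simpa using hs⟩

lemma abovePaths_eq_empty_of_not_le (h : ¬s ≤ t) : abovePaths k s t = ∅ :=
  Set.eq_empty_of_forall_notMem fun _ hP => h hP.1.le

lemma abovePaths_eq_empty_of_lt (ht : t.2 < k * t.1) : abovePaths k s t = ∅ :=
  Set.eq_empty_of_forall_notMem fun _ hP => (hP.2 t (List.mem_of_getLast? hP.1.2.1)).not_gt ht

lemma abovePaths_eq_image (hst : s ≠ t) (ht : k * t.1 ≤ t.2) :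
    abovePaths k s t =
      (· ++ [t]) '' (abovePaths k s (t.1 - 1, t.2) ∪ abovePaths k s (t.1, t.2 - 1)) := by
  ext P
  constructor
  · rintro ⟨hP, habove⟩
    obtain ⟨u, Q, rfl, hQ, hu⟩ := hP.exists_eq_append_singleton hst
    have hQ' : MonoPath s u Q ∧ ∀ p ∈ Q, k * p.1 ≤ p.2 :=
      ⟨hQ, fun p hp => habove p (List.mem_append_left _ hp)⟩
    refine ⟨Q, ?_, rfl⟩
    rcases isStep_iff.1 hu with rfl | rfl
    exacts [Or.inl hQ', Or.inr hQ']
  · rintro ⟨Q, hQ, rfl⟩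
    obtain ⟨u, hu, hQ, habove⟩ :
        ∃ u, IsStep u t ∧ MonoPath s u Q ∧ ∀ p ∈ Q, k * p.1 ≤ p.2 := by
      rcases hQ with hQ | hQ
      exacts [⟨_, isStep_iff.2 (Or.inl rfl), hQ⟩, ⟨_, isStep_iff.2 (Or.inr rfl), hQ⟩]
    refine ⟨hQ.append_singleton hu, fun p hp => ?_⟩
    rcases List.mem_append.1 hp with hp | hp
    exacts [habove p hp, List.mem_singleton.1 hp ▸ ht]

lemma ncard_abovePaths_eq_add (hst : s ≠ t) (ht : k * t.1 ≤ t.2) :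
    (abovePaths k s t).ncard =
      (abovePaths k s (t.1 - 1, t.2)).ncard + (abovePaths k s (t.1, t.2 - 1)).ncard := by
  have hfin (u : ℤ × ℤ) : (abovePaths k s u).Finite :=
    (monoPath_finite s u).subset fun _ h => h.1
  have hdisj : Disjoint (abovePaths k s (t.1 - 1, t.2)) (abovePaths k s (t.1, t.2 - 1)) :=
    Set.disjoint_left.2 fun Q h₁ h₂ => by
      have := h₁.1.2.1.symm.trans h₂.1.2.1
      simp only [Option.some.injEq, Prod.mk.injEq] at this
      omega
  rw [abovePaths_eq_image hst ht, Set.ncard_image_of_injective _ (List.append_left_injective _),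
    Set.ncard_union_eq hdisj (hfin _) (hfin _)]

end abovePaths

lemma IC_zero_right (x : ℤ) : IC x 0 = 1 := by simp [IC]

lemma IC_of_neg (x : ℤ) {j : ℤ} (hj : j < 0) : IC x j = 0 := by simp [IC, hj]

lemma IC_pascal {x : ℤ} (hx : 1 ≤ x) (j : ℤ) :
    IC x j = IC (x - 1) (j - 1) + IC (x - 1) j := by
  rcases lt_trichotomy j 0 with hj | rfl | hj
  · rw [IC_of_neg _ hj, IC_of_neg _ (by omega), IC_of_neg _ hj]
  · rw [IC_zero_right, IC_of_neg _ (by omega), IC_zero_right]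
  · simp only [IC, if_neg (by omega : ¬j < 0), if_neg (by omega : ¬j - 1 < 0)]
    rw [show x.toNat = (x - 1).toNat + 1 by omega, show j.toNat = (j - 1).toNat + 1 by omega,
      Nat.choose_succ_succ]

lemma Nat.mul_add_one_add_choose_add_one (k r : ℕ) :
    (k * (r + 1) + r).choose (r + 1) = k * (k * (r + 1) + r).choose r := by
  have h := Nat.choose_succ_right_eq (k * (r + 1) + r) r
  rw [Nat.add_sub_cancel] at h
  apply Nat.eq_of_mul_eq_mul_right (by positivity : 0 < r + 1)
  rw [h]
  ring

lemma IC_add_one_mul_sub_one {k s : ℤ} (hk : 0 ≤ k) (hs : 1 ≤ s) :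
    (IC ((k + 1) * s - 1) s : ℤ) = k * IC ((k + 1) * s - 1) (s - 1) := by
  lift k to ℕ using hk
  obtain ⟨r, rfl⟩ : ∃ r : ℕ, s = r + 1 := ⟨(s - 1).toNat, by omega⟩
  have hx : ((k + 1 : ℤ) * (r + 1) - 1).toNat = k * (r + 1) + r := by
    rw [← Int.toNat_natCast (k * (r + 1) + r)]
    push_cast
    ring_nf
  simp only [IC, hx, if_neg (by omega : ¬((r : ℤ) + 1 < 0)),
    if_neg (by omega : ¬((r : ℤ) + 1 - 1 < 0)), show ((r : ℤ) + 1).toNat = r + 1 by omega,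
    show ((r : ℤ) + 1 - 1).toNat = r by omega,
    Nat.mul_add_one_add_choose_add_one]
  push_cast
  rfl

def ballot (k x s : ℤ) : ℤ := IC x s - k * IC x (s - 1)

section ballot

variable {k x s : ℤ}

lemma ballot_zero_right : ballot k x 0 = 1 := by
  simp [ballot, IC_zero_right, IC_of_neg]

lemma ballot_of_neg (hs : s < 0) : ballot k x s = 0 := by
  simp [ballot, IC_of_neg _ hs, IC_of_neg _ (show s - 1 < 0 by omega)]

lemma ballot_pascal (hx : 1 ≤ x) :
    ballot k x s = ballot k (x - 1) (s - 1) + ballot k (x - 1) s := by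
  simp only [ballot, IC_pascal hx s, IC_pascal hx (s - 1)]
  push_cast
  ring

lemma ballot_eq_zero (hk : 0 ≤ k) (hs : 1 ≤ s) (hx : x = (k + 1) * s - 1) :
    ballot k x s = 0 := by
  rw [ballot, hx, IC_add_one_mul_sub_one hk hs, sub_self]

end ballot

theorem ncard_abovePaths_eq_ballot {k a j : ℤ} (hk : 0 ≤ k) (hj0 : 0 ≤ j) (hjk : j ≤ k)
    {m n : ℤ} (ham : a ≤ m) (hmn : k * m ≤ n) (hbn : k * a + j ≤ n) :
    ((abovePaths k (a, k * a + j) (m, n)).ncard : ℤ) =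
      ballot k (m + n - (k + 1) * a) (m - a) := by
  by_cases hst : (a, k * a + j) = (m, n)
  · simp only [Prod.mk.injEq] at hst
    obtain ⟨rfl, rfl⟩ := hst
    rw [abovePaths_self (by simpa using hj0), Set.ncard_singleton, sub_self, ballot_zero_right,
      Nat.cast_one]
  have hka : k * a ≤ k * m := mul_le_mul_of_nonneg_left ham hk
  rw [ncard_abovePaths_eq_add hst hmn, ballot_pascal (by grind)]
  push_cast
  congr 1
  · rcases ham.eq_or_lt with rfl | ham
    · rw [abovePaths_eq_empty_of_not_le (by simp [Prod.le_def]), Set.ncard_empty,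
        ballot_of_neg (by omega), Nat.cast_zero]
    · rw [ncard_abovePaths_eq_ballot hk hj0 hjk (by omega) (by linarith) hbn]
      ring_nf
  · rcases hmn.eq_or_lt with hmn | hmn
    · rw [abovePaths_eq_empty_of_lt (by dsimp only; omega), Set.ncard_empty,
        ballot_eq_zero hk (by grind) (by grind), Nat.cast_zero]
    · have hbn' : k * a + j ≤ n - 1 := by
        rcases ham.eq_or_lt with rfl | ham
        · simp only [Prod.mk.injEq, true_and] at hst
          omega
        · nlinarith
      rw [ncard_abovePaths_eq_ballot hk hj0 hjk ham (by omega) hbn']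
      ring_nf
termination_by (m + n - a - (k * a + j)).toNat
decreasing_by all_goals omega

theorem stmt2_general (k a j m n : ℤ) (hk : 1 ≤ k) (ham : a ≤ m)
    (hn : k * m ≤ n) (hj0 : 0 ≤ j) (hjk : j ≤ k) (hbn : k * a + j ≤ n) :
    (NW k 0 a (k * a + j) m n : ℤ) =
      (IC (m + n - (k + 1) * a) (m - a) : ℤ) - k * (IC (m + n - (k + 1) * a) (m - a - 1) : ℤ) := by
  rw [NW_zero_eq_ncard_abovePaths]
  exact ncard_abovePaths_eq_ballot (by omega) hj0 hjk ham hn hbn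

theorem stmt2 (k a j m n : ℤ) (hk : 1 ≤ k) (hm : 1 ≤ m) (ha : 0 ≤ a) (ham : a ≤ m)
    (hn : k * m ≤ n) (hj0 : 0 ≤ j) (hjk : j ≤ k) (hbn : k * a + j ≤ n) :
    (NW k 0 a (k * a + j) m n : ℤ) =
      (IC (m + n - (k + 1) * a) (m - a) : ℤ) - k * (IC (m + n - (k + 1) * a) (m - a - 1) : ℤ) :=
  stmt2_general k a j m n hk ham hn hj0 hjk hbn
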